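/- arXiv:2102.06627 — 5 statements merged into one kernel-verified Lean document; each statement's English description precedes it below -/
import Mathlib

section
/- Let d_m, d_ρ, d, r be positive integers. Let Γ_pr ∈ ℝ^{d_m×d_m} be symmetric positive definite, P ∈ ℝ^{d_ρ×d_m} with Σ_pr := P Γ_pr Pᵀ invertible, and F_d ∈ ℝ^{d×d_m}. Set P_† := Γ_pr Pᵀ Σ_pr^{-1}, H_d^ρ := F_d Γ_pr Pᵀ Σ_pr^{-1} P Γ_pr F_dᵀ, H_d := F_d Γ_pr F_dᵀ, ΔH_d := H_d − H_d^ρ. Let Γ_n^d ∈ ℝ^{d×d} be diagonal with positive diagonal entries, and let W ∈ ℝ^{r×d} be a matrix each of whose rows is a standard basis vector of ℝ^d, with distinct rows (so W Wᵀ = I_r). Define Γ_η(W) := W(Γ_n^d + ΔH_d)Wᵀ, and assume Γ_η(W) is invertible. Then for any L ∈ ℝ^{r×r} with L Lᵀ = Γ_η(W)^{-1}, one has (1/2)·log det(I_{d_ρ} + Σ_pr^{1/2} (W F_d P_†)ᵀ Γ_η(W)^{-1} (W F_d P_†) Σ_pr^{1/2}) = (1/2)·log det(I_r + Lᵀ W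 H_d^ρ Wᵀ L), where Σ_pr^{1/2} denotes the positive semidefinite square root of Σ_pr. -/
/-!
Both sides are `log det (1 + ·)` of the two Gram products of one matrix: with
`M = Lᵀ (W F_d P_†) Σ_pr^{1/2}`, the left-hand argument is `1 + Mᵀ M` because
`Γ_η(W)⁻¹ = L Lᵀ`, and the right-hand argument is `1 + M Mᵀ` because
`Σ_pr⁻¹ Σ_pr^{1/2} Σ_pr^{1/2} Σ_pr⁻¹ = Σ_pr⁻¹`. Sylvester's determinant identity
`det (1 + Mᵀ M) = det (1 + M Mᵀ)` finishes the proof.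
-/

open Matrix

namespace Matrix

variable {m n R : Type*} [Fintype n] [DecidableEq n] [CommRing R]

/-- For singular `A` this holds because of the junk value `A⁻¹ = 0`. -/
theorem nonsing_inv_mul_mul_nonsing_inv (A : Matrix n n R) : A⁻¹ * A * A⁻¹ = A⁻¹ := by
  rcases nonsing_inv_cancel_or_zero A with ⟨hinv, -⟩ | hzero
  · rw [hinv, Matrix.one_mul]
  · rw [hzero, Matrix.zero_mul, Matrix.zero_mul]

theorem mul_nonsing_inv_mul_sqrt_mul_transpose {S A : Matrix n n R} (hS : S.IsSymm)
    (hSS : S * S = A) (B : Matrix m n R) :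
    B * A⁻¹ * S * (B * A⁻¹ * S)ᵀ = B * A⁻¹ * Bᵀ := by
  have hA : A.IsSymm := by
    rw [← hSS]
    exact (transpose_mul S S).trans (by rw [hS.eq])
  calc B * A⁻¹ * S * (B * A⁻¹ * S)ᵀ = B * (A⁻¹ * (S * S) * A⁻¹) * Bᵀ := by
        simp only [transpose_mul, hS.eq, hA.inv.eq, Matrix.mul_assoc]
    _ = B * A⁻¹ * Bᵀ := by
        rw [hSS, nonsing_inv_mul_mul_nonsing_inv, Matrix.mul_assoc]

end Matrix

theorem stmt0_general (d_m d_ρ d r : ℕ)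
    -- prior covariance
    (Γpr : Matrix (Fin d_m) (Fin d_m) ℝ) (hΓpr : Γpr.PosDef)
    -- goal operator and goal prior covariance
    (P : Matrix (Fin d_ρ) (Fin d_m) ℝ)
    (Spr : Matrix (Fin d_ρ) (Fin d_ρ) ℝ)
    -- full parameter-to-observable map
    (Fd : Matrix (Fin d) (Fin d_m) ℝ)
    -- P_† := Γ_pr Pᵀ Sigma_pr⁻¹
    (Pd : Matrix (Fin d_m) (Fin d_ρ) ℝ) (hPd : Pd = Γpr * Pᵀ * Spr⁻¹)
    -- H_d^ρ := F_d Γ_pr Pᵀ Sigma_pr⁻¹ P Γ_pr F_dᵀ,  H_d := F_d Γ_pr F_dᵀ,  ΔH_d := H_d − H_d^ρ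
    (Hρ : Matrix (Fin d) (Fin d) ℝ) (hHρ : Hρ = Fd * Γpr * Pᵀ * Spr⁻¹ * P * Γpr * Fdᵀ)
    -- design matrix: each row a standard basis vector of ℝ^d, rows distinct
    (W : Matrix (Fin r) (Fin d) ℝ)
    -- Γ_η(W) := W (Γ_n^d + ΔH_d) Wᵀ, assumed invertible
    (Γη : Matrix (Fin r) (Fin r) ℝ)
    -- S is the positive semidefinite square root of Sigma_pr
    (Ssqrt : Matrix (Fin d_ρ) (Fin d_ρ) ℝ) (hSpsd : Ssqrt.PosSemidef) (hSS : Ssqrt * Ssqrt = Spr)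
    -- Cholesky-type factor: L Lᵀ = Γ_η(W)⁻¹
    (L : Matrix (Fin r) (Fin r) ℝ) (hL : L * Lᵀ = Γη⁻¹) :
    (1 / 2) * Real.log (1 + Ssqrt * (W * Fd * Pd)ᵀ * Γη⁻¹ * (W * Fd * Pd) * Ssqrt).det =
      (1 / 2) * Real.log (1 + Lᵀ * W * Hρ * Wᵀ * L).det := by
  have hΓprT : Γprᵀ = Γpr := (isHermitian_iff_isSymm.mp hΓpr.isHermitian).eq
  have hST : Ssqrt.IsSymm := isHermitian_iff_isSymm.mp hSpsd.isHermitian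
  set M := Lᵀ * (W * Fd * Pd * Ssqrt)
  have hLHS : Ssqrt * (W * Fd * Pd)ᵀ * Γη⁻¹ * (W * Fd * Pd) * Ssqrt = Mᵀ * M := by
    simp only [M, ← hL, transpose_mul, transpose_transpose, hST.eq, Matrix.mul_assoc]
  have hRHS : Lᵀ * W * Hρ * Wᵀ * L = M * Mᵀ := by
    set B := W * Fd * Γpr * Pᵀ
    calc Lᵀ * W * Hρ * Wᵀ * L = Lᵀ * (B * Spr⁻¹ * Bᵀ) * L := by
          simp only [B, hHρ, transpose_mul, transpose_transpose, hΓprT, Matrix.mul_assoc]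
      _ = Lᵀ * (B * Spr⁻¹ * Ssqrt * (B * Spr⁻¹ * Ssqrt)ᵀ) * L := by
          rw [mul_nonsing_inv_mul_sqrt_mul_transpose hST hSS]
      _ = M * Mᵀ := by
          simp only [M, B, hPd, transpose_mul, transpose_transpose, Matrix.mul_assoc]
  rw [hLHS, hRHS, det_one_add_mul_comm]

/-- Theorem 3.1 of the paper: the goal-oriented expected information gain admits
an offline-online computable form. -/
theorem stmt0 (d_m d_ρ d r : ℕ) (hdm : 0 < d_m) (hdρ : 0 < d_ρ) (hd : 0 < d) (hr : 0 < r)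
    -- prior covariance
    (Γpr : Matrix (Fin d_m) (Fin d_m) ℝ) (hΓpr : Γpr.PosDef)
    -- goal operator and goal prior covariance
    (P : Matrix (Fin d_ρ) (Fin d_m) ℝ)
    (Spr : Matrix (Fin d_ρ) (Fin d_ρ) ℝ) (hSprdef : Spr = P * Γpr * Pᵀ)
    (hSprinv : IsUnit Spr.det)
    -- full parameter-to-observable map
    (Fd : Matrix (Fin d) (Fin d_m) ℝ)
    -- P_† := Γ_pr Pᵀ Sigma_pr⁻¹
    (Pd : Matrix (Fin d_m) (Fin d_ρ) ℝ) (hPd : Pd = Γpr * Pᵀ * Spr⁻¹)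
    -- H_d^ρ := F_d Γ_pr Pᵀ Sigma_pr⁻¹ P Γ_pr F_dᵀ,  H_d := F_d Γ_pr F_dᵀ,  ΔH_d := H_d − H_d^ρ
    (Hρ : Matrix (Fin d) (Fin d) ℝ) (hHρ : Hρ = Fd * Γpr * Pᵀ * Spr⁻¹ * P * Γpr * Fdᵀ)
    (Hd : Matrix (Fin d) (Fin d) ℝ) (hHd : Hd = Fd * Γpr * Fdᵀ)
    (ΔH : Matrix (Fin d) (Fin d) ℝ) (hΔH : ΔH = Hd - Hρ)
    -- noise covariance: diagonal with positive diagonal entries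
    (σsq : Fin d → ℝ) (hσ : ∀ i, 0 < σsq i)
    (Γn : Matrix (Fin d) (Fin d) ℝ) (hΓn : Γn = Matrix.diagonal σsq)
    -- design matrix: each row a standard basis vector of ℝ^d, rows distinct
    (W : Matrix (Fin r) (Fin d) ℝ) (f : Fin r → Fin d) (hf : Function.Injective f)
    (hW : W = Matrix.of fun i j => if j = f i then (1 : ℝ) else 0)
    -- Γ_η(W) := W (Γ_n^d + ΔH_d) Wᵀ, assumed invertible
    (Γη : Matrix (Fin r) (Fin r) ℝ) (hΓη : Γη = W * (Γn + ΔH) * Wᵀ)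
    (hΓηinv : IsUnit Γη.det)
    -- S is the positive semidefinite square root of Sigma_pr
    (Ssqrt : Matrix (Fin d_ρ) (Fin d_ρ) ℝ) (hSpsd : Ssqrt.PosSemidef) (hSS : Ssqrt * Ssqrt = Spr)
    -- Cholesky-type factor: L Lᵀ = Γ_η(W)⁻¹
    (L : Matrix (Fin r) (Fin r) ℝ) (hL : L * Lᵀ = Γη⁻¹) :
    (1 / 2) * Real.log (1 + Ssqrt * (W * Fd * Pd)ᵀ * Γη⁻¹ * (W * Fd * Pd) * Ssqrt).det =
      (1 / 2) * Real.log (1 + Lᵀ * W * Hρ * Wᵀ * L).det :=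
  stmt0_general d_m d_ρ d r Γpr hΓpr P Spr Fd Pd hPd Hρ hHρ W Γη Ssqrt hSpsd hSS L hL
end

section
/- Let A, B ∈ ℂ^{n×n} be Hermitian positive semidefinite matrices such that A − B is also Hermitian positive semidefinite. Then 0 ≤ log det(I + A) − log det(I + B) ≤ log det(I + A − B), where all three determinants are positive real numbers. -/
open Matrix
open scoped ComplexOrder MatrixOrder Pointwise

/-!
Both inequalities come from the Loewner monotonicity of `det` on positive semidefinite
matrices, `0 ≤ M ≤ N → det M ≤ det N`. For the upper bound write `A - B = R⋆R`; the matrix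
determinant lemma gives `det (1 + A) = det (1 + B) * det (1 + R (1 + B)⁻¹ R⋆)`, and since
`(1 + B)⁻¹ ≤ 1` the last factor is at most `det (1 + R R⋆) = det (1 + R⋆R) = det (1 + (A - B))`.
-/

namespace Matrix

variable {𝕜 n : Type*} [RCLike 𝕜] [DecidableEq n]

theorem posDef_of_one_le {A : Matrix n n 𝕜} (hA : 1 ≤ A) : A.PosDef := by
  simpa using PosDef.one.add_posSemidef (sub_nonneg.mpr hA).posSemidef

variable [Fintype n]

theorem one_le_det_one_add {K : Matrix n n 𝕜} (hK : 0 ≤ K) : 1 ≤ (1 + K).det := by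
  have hH : (1 + K).IsHermitian := (PosDef.one.add_posSemidef hK.posSemidef).isHermitian
  have one_le_eigenvalues (i : n) : 1 ≤ hH.eigenvalues i := by
    have hσ : spectrum ℝ (1 + K) = ({1} : Set ℝ) + spectrum ℝ K := by
      rw [spectrum.singleton_add_eq, map_one]
    obtain ⟨_, rfl, s, hs, hi⟩ :=
      Set.mem_add.mp (hσ ▸ hH.eigenvalues_mem_spectrum_real i)
    linarith [spectrum_nonneg_of_nonneg hK hs]
  rw [hH.det_eq_prod_eigenvalues, ← RCLike.ofReal_prod, ← RCLike.ofReal_one,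
    RCLike.ofReal_le_ofReal]
  exact Finset.one_le_prod fun i _ => one_le_eigenvalues i

theorem det_le_det_of_le {A B : Matrix n n 𝕜} (hA : 0 ≤ A) (hAB : A ≤ B) : A.det ≤ B.det := by
  by_cases hdet : A.det = 0
  · rw [hdet]
    exact (hA.trans hAB).posSemidef.det_nonneg
  have hPD : A.PosDef := hA.posSemidef.posDef_iff_det_ne_zero.mpr hdet
  obtain ⟨R, hR⟩ := CStarAlgebra.nonneg_iff_eq_star_mul_self.mp (sub_nonneg.mpr hAB)
  rw [← add_sub_cancel A B, hR, det_add_mul _ _ (isUnit_iff_ne_zero.mpr hdet)]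
  exact le_mul_of_one_le_right hA.posSemidef.det_nonneg
    (one_le_det_one_add (star_right_conjugate_nonneg hPD.inv.posSemidef.nonneg R))

theorem inv_le_one_of_one_le {A : Matrix n n 𝕜} (hA : 1 ≤ A) : A⁻¹ ≤ 1 := by
  have hD : 0 ≤ A - 1 := sub_nonneg.mpr hA
  have hPD := posDef_of_one_le hA
  have hu : IsUnit A.det := hPD.isUnit.map detMonoidHom
  have key :
      1 - A⁻¹ = star A⁻¹ * (A - 1) * A⁻¹ + star ((A - 1) * A⁻¹) * ((A - 1) * A⁻¹) := by
    rw [star_mul, hD.isSelfAdjoint.star_eq, star_eq_conjTranspose, hPD.inv.isHermitian.eq]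
    simp [mul_sub, sub_mul, nonsing_inv_mul _ hu, mul_nonsing_inv _ hu]
  exact sub_nonneg.mp <|
    key ▸ add_nonneg (star_left_conjugate_nonneg hD _) (star_mul_self_nonneg _)

theorem det_add_le_det_mul_det_one_add {A C : Matrix n n 𝕜} (hA : 1 ≤ A) (hC : 0 ≤ C) :
    (A + C).det ≤ A.det * (1 + C).det := by
  have hPD := posDef_of_one_le hA
  obtain ⟨R, rfl⟩ := CStarAlgebra.nonneg_iff_eq_star_mul_self.mp hC
  rw [det_add_mul _ _ (hPD.isUnit.map detMonoidHom), det_one_add_mul_comm (star R)]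
  refine mul_le_mul_of_nonneg_left (det_le_det_of_le ?_ ?_) hPD.posSemidef.det_nonneg
  · exact add_nonneg zero_le_one (star_right_conjugate_nonneg hPD.inv.posSemidef.nonneg R)
  · simpa using
      add_le_add_right (star_right_conjugate_le_conjugate (inv_le_one_of_one_le hA) R) 1

end Matrix

/-- Proposition 3.3 of the paper: for Hermitian positive semidefinite `A`, `B` with
`A − B` positive semidefinite, `0 ≤ log det(I+A) − log det(I+B) ≤ log det(I+A−B)`,
all three determinants being positive real numbers. -/
theorem stmt2 (n : ℕ) (A B : Matrix (Fin n) (Fin n) ℂ)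
    (hA : A.PosSemidef) (hB : B.PosSemidef) (hAB : (A - B).PosSemidef) :
    ((1 + A).det.im = 0 ∧ 0 < (1 + A).det.re) ∧
      ((1 + B).det.im = 0 ∧ 0 < (1 + B).det.re) ∧
      ((1 + (A - B)).det.im = 0 ∧ 0 < (1 + (A - B)).det.re) ∧
      0 ≤ Real.log (1 + A).det.re - Real.log (1 + B).det.re ∧
      Real.log (1 + A).det.re - Real.log (1 + B).det.re ≤
        Real.log (1 + (A - B)).det.re := by
  have det_one_add_pos : ∀ X : Matrix (Fin n) (Fin n) ℂ, X.PosSemidef →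
      (1 + X).det.im = 0 ∧ 0 < (1 + X).det.re := fun X hX => by
    obtain ⟨hre, him⟩ := Complex.lt_def.mp (PosDef.one.add_posSemidef hX).det_pos
    exact ⟨him.symm, hre⟩
  obtain ⟨hAim, hApos⟩ := det_one_add_pos A hA
  obtain ⟨hBim, hBpos⟩ := det_one_add_pos B hB
  obtain ⟨hCim, hCpos⟩ := det_one_add_pos (A - B) hAB
  have hmono : (1 + B).det.re ≤ (1 + A).det.re :=
    (Complex.le_def.mp <| det_le_det_of_le (PosDef.one.add_posSemidef hB).posSemidef.nonneg
      (add_le_add_right (sub_nonneg.mp hAB.nonneg) 1)).1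
  have hsub : (1 + A).det.re ≤ (1 + B).det.re * (1 + (A - B)).det.re := by
    have h := det_add_le_det_mul_det_one_add (le_add_of_nonneg_right hB.nonneg) hAB.nonneg
    rw [add_add_sub_cancel] at h
    simpa [Complex.mul_re, hBim, hCim] using (Complex.le_def.mp h).1
  refine ⟨⟨hAim, hApos⟩, ⟨hBim, hBpos⟩, ⟨hCim, hCpos⟩,
    sub_nonneg.mpr (Real.log_le_log hBpos hmono), ?_⟩
  rw [sub_le_iff_le_add', ← Real.log_mul hBpos.ne' hCpos.ne']
  exact Real.log_le_log hApos hsub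
end

section
/- Let A ∈ ℝ^{n×m} and let B ∈ ℝ^{m×m} be symmetric positive semidefinite. Then log det(I_n + A B Aᵀ) ≤ Σ_{i=1}^m log(1 + σ_i(Aᵀ A)·σ_i(B)), where σ_i(M) denotes the i-th largest eigenvalue of a symmetric positive semidefinite real matrix M (equivalently its i-th singular value). -/
/-!
Put `S = (AᵀA)^{1/2}`. By Sylvester's identity `det (1 + A B Aᵀ) = det (1 + S B S)`, which is
`∏ (1 + λᵢ(S B S))`. For every `k`, the product of the `k` largest eigenvalues of `S B S` is at most
`∏_{i<k} λᵢ(AᵀA) λᵢ(B)`: if the columns of `V` are orthonormal top-`k` eigenvectors of `S B S`, then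
`det (Vᵀ S B S V) ≤ (∏_{i<k} λᵢ(B)) det (Vᵀ S² V) ≤ (∏_{i<k} λᵢ(B)) (∏_{i<k} λᵢ(S²))`, where both
compressions are bounded by the Cauchy–Binet formula. Finally, such a weak log-majorization of
nonnegative sequences passes to `∑ log (1 + ·)`, because `t ↦ log (1 + eᵗ)` is convex and
increasing; concretely, by tangent-line bounds and Abel summation.
-/

open Matrix

/-- `eigs M i` is the `i`-th largest eigenvalue of a Hermitian (symmetric) real matrix `M`
(junk value `0` if `M` is not Hermitian); for a symmetric positive semidefinite matrix
these coincide with its singular values, sorted in non-increasing order. -/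
noncomputable def eigs {d : ℕ} (M : Matrix (Fin d) (Fin d) ℝ) : Fin d → ℝ :=
  if h : M.IsHermitian then
    fun i => (h.eigenvalues ∘ Tuple.sort h.eigenvalues) i.rev
  else 0

open Finset

lemma Matrix.transpose_submatrix_mul_mul_submatrix {l n α : Type*} [Fintype n] [Semiring α]
    (U X : Matrix n n α) (e : l → n) :
    (U.submatrix id e)ᵀ * X * U.submatrix id e = (Uᵀ * X * U).submatrix e e := by
  rw [transpose_submatrix, submatrix_mul _ _ _ id _ Function.bijective_id,
    submatrix_mul _ _ _ id _ Function.bijective_id, submatrix_id_id]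

lemma Matrix.PosSemidef.mul_mul_same_of_transpose_eq {n : Type*} [Fintype n]
    {S B : Matrix n n ℝ} (hB : B.PosSemidef) (hS : Sᵀ = S) : (S * B * S).PosSemidef := by
  simpa [conjTranspose_eq_transpose_of_trivial, hS] using hB.mul_mul_conjTranspose_same S

section SortedEigenvalues

variable {d : ℕ} {M : Matrix (Fin d) (Fin d) ℝ}

lemma exists_perm_eigs_eq (hM : M.IsHermitian) :
    ∃ σ : Equiv.Perm (Fin d), eigs M = hM.eigenvalues ∘ σ :=
  ⟨Fin.revPerm.trans (Tuple.sort hM.eigenvalues), by rw [eigs, dif_pos hM]; rfl⟩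

lemma eigs_antitone (hM : M.IsHermitian) : Antitone (eigs M) := by
  intro i j hij
  simp only [eigs, dif_pos hM]
  exact Tuple.monotone_sort hM.eigenvalues (Fin.rev_le_rev.mpr hij)

lemma eigs_nonneg (hM : M.PosSemidef) (i : Fin d) : 0 ≤ eigs M i := by
  obtain ⟨σ, hσ⟩ := exists_perm_eigs_eq hM.1
  rw [hσ]
  exact hM.eigenvalues_nonneg _

lemma exists_orthogonal_transpose_mul_mul_eq_diagonal_eigs (hM : M.IsHermitian) :
    ∃ U : Matrix (Fin d) (Fin d) ℝ, Uᵀ * U = 1 ∧ U * Uᵀ = 1 ∧ Uᵀ * M * U = diagonal (eigs M) := by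
  obtain ⟨σ, hσ⟩ := exists_perm_eigs_eq hM
  set U₀ : Matrix (Fin d) (Fin d) ℝ := (hM.eigenvectorUnitary : Matrix (Fin d) (Fin d) ℝ)
  have hstar : star U₀ = U₀ᵀ := by
    rw [star_eq_conjTranspose, conjTranspose_eq_transpose_of_trivial]
  have hU₀ : U₀ᵀ * M * U₀ = diagonal hM.eigenvalues := by
    have := hM.conjStarAlgAut_star_eigenvectorUnitary
    rw [Unitary.conjStarAlgAut_star_apply] at this
    simpa [← hstar, U₀] using this
  refine ⟨U₀.submatrix id σ, ?_, ?_, ?_⟩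
  · rw [← Matrix.mul_one (U₀.submatrix id σ)ᵀ, transpose_submatrix_mul_mul_submatrix,
      Matrix.mul_one, ← hstar, Unitary.coe_star_mul_self, submatrix_one_equiv]
  · rw [transpose_submatrix, submatrix_mul_equiv, submatrix_id_id, ← hstar]
    exact Unitary.mul_star_self_of_mem hM.eigenvectorUnitary.2
  · rw [transpose_submatrix_mul_mul_submatrix, hU₀, hσ]
    exact submatrix_diagonal_equiv _ σ

end SortedEigenvalues

lemma Fin.castLE_le_of_strictMono {k m : ℕ} (hk : k ≤ m) {f : Fin k → Fin m} (hf : StrictMono f)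
    (j : Fin k) : Fin.castLE hk j ≤ f j := by
  rw [Fin.le_def, Fin.val_castLE, ← Fin.card_Iio j, ← Fin.card_Iio (f j)]
  exact Finset.card_le_card_of_injOn f (fun i hi => by simpa using hf (by simpa using hi))
    hf.injective.injOn

open Set.powersetCard in
theorem Matrix.det_transpose_mul_eq_sum_det_submatrix {ι : Type*} [Fintype ι] [LinearOrder ι]
    {k : ℕ} (X Y : Matrix ι (Fin k) ℝ) :
    (Xᵀ * Y).det = ∑ s : Set.powersetCard ι k,
      (X.submatrix (ofFinEmbEquiv.symm s) id).det *
        (Y.submatrix (ofFinEmbEquiv.symm s) id).det := by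
  let col : Matrix ι (Fin k) ℝ → Fin k → EuclideanSpace ℝ ι := fun Z j => WithLp.toLp 2 (Zᵀ j)
  have gram : ∀ Z W : Matrix ι (Fin k) ℝ, inner ℝ (exteriorPower.ιMulti ℝ k (col Z))
      (exteriorPower.ιMulti ℝ k (col W)) = (Zᵀ * W).det := by
    intro Z W
    rw [exteriorPower.inner_ιMulti_ιMulti, ← det_transpose]
    congr 1
    ext i j
    simp [col, Matrix.mul_apply, EuclideanSpace.inner_eq_star_dotProduct, dotProduct, mul_comm]
  let P : Set.powersetCard ι k → Matrix ι (Fin k) ℝ :=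
    fun s => (1 : Matrix ι ι ℝ).submatrix id (ofFinEmbEquiv.symm s)
  have basis : ∀ s, (EuclideanSpace.basisFun ι ℝ).exteriorPower k s =
      exteriorPower.ιMulti ℝ k (col (P s)) := by
    intro s
    rw [← OrthonormalBasis.coe_toBasis, OrthonormalBasis.toBasis_exteriorPower,
      exteriorPower.coe_basis, exteriorPower.ιMulti_family]
    congr 1
    funext j
    ext i
    simp [col, P, Matrix.one_apply]
  have minor : ∀ (Z : Matrix ι (Fin k) ℝ) s,
      (P s)ᵀ * Z = Z.submatrix (ofFinEmbEquiv.symm s) id := by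
    intro Z s
    rw [transpose_submatrix, transpose_one]
    exact one_submatrix_mul _ (Equiv.refl ι) Z
  -- Parseval's identity in `⋀ᵏ ℝ^ι`, for the orthonormal basis induced by the standard one
  rw [← gram, ← (EuclideanSpace.basisFun ι ℝ).exteriorPower k |>.sum_inner_mul_inner]
  refine Finset.sum_congr rfl fun s _ => ?_
  rw [real_inner_comm, basis, gram, gram, minor, minor]

open Set.powersetCard in
lemma det_transpose_mul_diagonal_mul_le {m k : ℕ} (hk : k ≤ m) {d : Fin m → ℝ} (hd : Antitone d)
    (hd0 : 0 ≤ d) (Y : Matrix (Fin m) (Fin k) ℝ) :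
    (Yᵀ * diagonal d * Y).det ≤ (∏ j : Fin k, d (Fin.castLE hk j)) * (Yᵀ * Y).det := by
  have hsymm : Yᵀ * diagonal d * Y = (diagonal d * Y)ᵀ * Y := by
    rw [transpose_mul, diagonal_transpose]
  rw [hsymm, det_transpose_mul_eq_sum_det_submatrix, det_transpose_mul_eq_sum_det_submatrix,
    Finset.mul_sum]
  refine Finset.sum_le_sum fun s _ => ?_
  set e := ofFinEmbEquiv.symm s
  have hminor : (diagonal d * Y).submatrix e id = diagonal (d ∘ e) * Y.submatrix e id := by
    ext; simp [diagonal_mul]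
  rw [hminor, det_mul, det_diagonal, mul_assoc]
  refine mul_le_mul_of_nonneg_right (Finset.prod_le_prod (fun j _ => hd0 _) fun j _ => ?_)
    (mul_self_nonneg _)
  exact hd (Fin.castLE_le_of_strictMono hk e.strictMono j)

lemma det_transpose_mul_mul_le {m k : ℕ} (hk : k ≤ m) {B : Matrix (Fin m) (Fin m) ℝ}
    (hB : B.PosSemidef) (W : Matrix (Fin m) (Fin k) ℝ) :
    (Wᵀ * B * W).det ≤ (∏ j : Fin k, eigs B (Fin.castLE hk j)) * (Wᵀ * W).det := by
  obtain ⟨U, hUU, hUU', hdiag⟩ := exists_orthogonal_transpose_mul_mul_eq_diagonal_eigs hB.1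
  have hB' : B = U * diagonal (eigs B) * Uᵀ := by
    rw [← hdiag, ← mul_assoc, ← mul_assoc, hUU', one_mul, mul_assoc, hUU', mul_one]
  have hW : Wᵀ * W = (Uᵀ * W)ᵀ * (Uᵀ * W) := by
    rw [transpose_mul, transpose_transpose, Matrix.mul_assoc, ← Matrix.mul_assoc U, hUU',
      Matrix.one_mul]
  have hBW : Wᵀ * B * W = (Uᵀ * W)ᵀ * diagonal (eigs B) * (Uᵀ * W) := by
    nth_rw 1 [hB']
    rw [transpose_mul, transpose_transpose]
    simp only [Matrix.mul_assoc]
  rw [hW, hBW]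
  exact det_transpose_mul_diagonal_mul_le hk (eigs_antitone hB.1) (eigs_nonneg hB) (Uᵀ * W)

lemma prod_eigs_mul_mul_le {m k : ℕ} (hk : k ≤ m) {S B : Matrix (Fin m) (Fin m) ℝ} (hS : Sᵀ = S)
    (hB : B.PosSemidef) :
    ∏ j : Fin k, eigs (S * B * S) (Fin.castLE hk j) ≤
      ∏ j : Fin k, eigs (S * S) (Fin.castLE hk j) * eigs B (Fin.castLE hk j) := by
  have hM : (S * B * S).PosSemidef := hB.mul_mul_same_of_transpose_eq hS
  have hC : (S * S).PosSemidef := by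
    simpa [conjTranspose_eq_transpose_of_trivial, hS] using posSemidef_conjTranspose_mul_self S
  obtain ⟨U, hUU, -, hdiag⟩ := exists_orthogonal_transpose_mul_mul_eq_diagonal_eigs hM.1
  set V := U.submatrix id (Fin.castLE hk)
  have hVV : Vᵀ * V = 1 := by
    rw [← Matrix.mul_one Vᵀ, transpose_submatrix_mul_mul_submatrix, Matrix.mul_one, hUU,
      submatrix_one _ (Fin.castLE_injective hk)]
  calc ∏ j : Fin k, eigs (S * B * S) (Fin.castLE hk j)
      = (Vᵀ * (S * B * S) * V).det := by
        rw [transpose_submatrix_mul_mul_submatrix, hdiag,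
          submatrix_diagonal _ _ (Fin.castLE_injective hk), det_diagonal]
        rfl
    _ = ((S * V)ᵀ * B * (S * V)).det := by
        rw [transpose_mul, hS]; simp only [Matrix.mul_assoc]
    _ ≤ (∏ j : Fin k, eigs B (Fin.castLE hk j)) * ((S * V)ᵀ * (S * V)).det :=
        det_transpose_mul_mul_le hk hB _
    _ = (∏ j : Fin k, eigs B (Fin.castLE hk j)) * (Vᵀ * (S * S) * V).det := by
        rw [transpose_mul, hS]; simp only [Matrix.mul_assoc]
    _ ≤ (∏ j : Fin k, eigs B (Fin.castLE hk j)) * ∏ j : Fin k, eigs (S * S) (Fin.castLE hk j) := by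
        refine mul_le_mul_of_nonneg_left ?_ (Finset.prod_nonneg fun j _ => eigs_nonneg hB _)
        simpa [hVV] using det_transpose_mul_mul_le hk hC V
    _ = ∏ j : Fin k, eigs (S * S) (Fin.castLE hk j) * eigs B (Fin.castLE hk j) := by
        rw [← Finset.prod_mul_distrib]
        exact Finset.prod_congr rfl fun j _ => mul_comm _ _

lemma det_one_add_eq_prod_one_add_eigs {d : ℕ} {M : Matrix (Fin d) (Fin d) ℝ}
    (hM : M.IsHermitian) : (1 + M).det = ∏ i, (1 + eigs M i) := by
  obtain ⟨U, hUU, -, hdiag⟩ := exists_orthogonal_transpose_mul_mul_eq_diagonal_eigs hM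
  have hconj : (Uᵀ * (1 + M) * U).det = (1 + M).det := by
    rw [det_mul, det_mul, mul_right_comm, ← det_mul, hUU, det_one, one_mul]
  rw [← hconj, Matrix.mul_add, Matrix.add_mul, Matrix.mul_one, hUU, hdiag, ← diagonal_one,
    diagonal_add, det_diagonal]

lemma Real.log_one_add_sub_log_one_add_le {a b : ℝ} (ha : 0 < a) (hb : 0 < b) :
    Real.log (1 + a) - Real.log (1 + b) ≤ a / (1 + a) * (Real.log a - Real.log b) := by
  have hweights : a / (1 + a) + 1 / (1 + a) = 1 := by field_simp; ring
  have hconc := strictConcaveOn_log_Ioi.concaveOn.2 (Set.mem_Ioi.mpr (div_pos hb ha))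
    (Set.mem_Ioi.mpr one_pos) (by positivity) (by positivity) hweights
  have hmean : a / (1 + a) * (b / a) + 1 / (1 + a) * 1 = (1 + b) / (1 + a) := by
    field_simp; ring
  simp only [smul_eq_mul, Real.log_one, mul_zero, add_zero, hmean] at hconc
  rw [Real.log_div hb.ne' ha.ne', Real.log_div (by positivity) (by positivity)] at hconc
  linarith

lemma Finset.sum_range_mul_nonpos_of_antitone {g d : ℕ → ℝ} {r : ℕ} (hg0 : ∀ i, 0 ≤ g i)
    (hg : Antitone g) (hd : ∀ k < r, 0 < g k → ∑ i ∈ range (k + 1), d i ≤ 0) :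
    ∑ i ∈ range r, g i * d i ≤ 0 := by
  rcases r with _ | n
  · simp
  have hparts := Finset.sum_range_by_parts g d (n + 1)
  simp only [smul_eq_mul, Nat.add_sub_cancel] at hparts
  have hlast : g n * ∑ i ∈ range (n + 1), d i ≤ 0 := by
    rcases (hg0 n).eq_or_lt with h | h
    · simp [← h]
    · exact mul_nonpos_of_nonneg_of_nonpos h.le (hd n n.lt_succ_self h)
  have hsteps : 0 ≤ ∑ i ∈ range n, (g (i + 1) - g i) * ∑ j ∈ range (i + 1), d j := by
    refine Finset.sum_nonneg fun i hi => ?_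
    rw [Finset.mem_range] at hi
    rcases (hg0 i).eq_or_lt with h | h
    · have : g (i + 1) = 0 := le_antisymm (h ▸ hg i.le_succ) (hg0 _)
      simp [← h, this]
    · exact mul_nonneg_of_nonpos_of_nonpos (sub_nonpos.mpr (hg i.le_succ)) (hd i (by omega) h)
  linarith

lemma sum_range_log_one_add_le_of_prod_le {a b : ℕ → ℝ} {m : ℕ} (ha0 : ∀ i, 0 ≤ a i)
    (ha : Antitone a) (hb0 : ∀ i, 0 ≤ b i)
    (hprod : ∀ k ≤ m, ∏ i ∈ range k, a i ≤ ∏ i ∈ range k, b i) :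
    ∑ i ∈ range m, Real.log (1 + a i) ≤ ∑ i ∈ range m, Real.log (1 + b i) := by
  have hprod_pos : ∀ k < m, 0 < a k →
      0 < ∏ i ∈ range (k + 1), a i ∧ 0 < ∏ i ∈ range (k + 1), b i := by
    intro k hk hak
    have hpos : 0 < ∏ i ∈ range (k + 1), a i :=
      Finset.prod_pos fun i hi => hak.trans_le (ha (Nat.lt_succ_iff.mp (Finset.mem_range.mp hi)))
    exact ⟨hpos, hpos.trans_le (hprod (k + 1) hk)⟩
  have hb_pos : ∀ k < m, 0 < a k → 0 < b k := fun k hk hak =>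
    (hb0 k).lt_of_ne' (Finset.prod_ne_zero_iff.mp (hprod_pos k hk hak).2.ne' k (by simp))
  rw [← sub_nonpos, ← Finset.sum_sub_distrib]
  -- tangent lines of the convex `t ↦ log (1 + eᵗ)` at `t = log aᵢ`; the slope vanishes if `aᵢ = 0`
  calc ∑ i ∈ range m, (Real.log (1 + a i) - Real.log (1 + b i))
      ≤ ∑ i ∈ range m, a i / (1 + a i) * (Real.log (a i) - Real.log (b i)) := by
        refine Finset.sum_le_sum fun i hi => ?_
        rcases (ha0 i).eq_or_lt with h | h
        · simpa [← h] using Real.log_nonneg (by linarith [hb0 i])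
        · exact Real.log_one_add_sub_log_one_add_le h (hb_pos i (Finset.mem_range.mp hi) h)
    _ ≤ 0 := by
        refine Finset.sum_range_mul_nonpos_of_antitone (fun i => by have := ha0 i; positivity)
          (fun i j hij => ?_) fun k hk hgk => ?_
        · have := ha0 j
          rw [div_le_div_iff₀ (by positivity) (by linarith [ha0 i])]
          nlinarith [ha hij]
        · have hak : 0 < a k := (div_pos_iff_of_pos_right (by linarith [ha0 k])).mp hgk
          obtain ⟨hA, hB⟩ := hprod_pos k hk hak
          rw [Finset.sum_sub_distrib, ← Real.log_prod (Finset.prod_ne_zero_iff.mp hA.ne'),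
            ← Real.log_prod (Finset.prod_ne_zero_iff.mp hB.ne'), sub_nonpos]
          exact Real.log_le_log hA (hprod (k + 1) hk)

lemma sum_log_one_add_le_of_prod_le {m : ℕ} {a b : Fin m → ℝ} (ha0 : 0 ≤ a) (ha : Antitone a)
    (hb0 : 0 ≤ b)
    (hprod : ∀ k (hk : k ≤ m),
      ∏ j : Fin k, a (Fin.castLE hk j) ≤ ∏ j : Fin k, b (Fin.castLE hk j)) :
    ∑ i, Real.log (1 + a i) ≤ ∑ i, Real.log (1 + b i) := by
  let extend : (Fin m → ℝ) → ℕ → ℝ := fun f i => if h : i < m then f ⟨i, h⟩ else 0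
  have hsum : ∀ f, ∑ i, Real.log (1 + f i) = ∑ i ∈ range m, Real.log (1 + extend f i) := by
    intro f
    rw [← Fin.sum_univ_eq_sum_range]
    simp [extend]
  have hprod_extend : ∀ f k (hk : k ≤ m),
      ∏ i ∈ range k, extend f i = ∏ j : Fin k, f (Fin.castLE hk j) := by
    intro f k hk
    rw [← Fin.prod_univ_eq_prod_range]
    exact Finset.prod_congr rfl fun j _ => dif_pos (j.2.trans_le hk)
  have hnonneg : ∀ f : Fin m → ℝ, 0 ≤ f → ∀ i, 0 ≤ extend f i := fun f hf i =>
    dite_nonneg (fun _ => hf _) fun _ => le_rfl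
  rw [hsum, hsum]
  refine sum_range_log_one_add_le_of_prod_le (hnonneg a ha0) (fun i j hij => ?_) (hnonneg b hb0)
    fun k hk => by simpa only [hprod_extend _ k hk] using hprod k hk
  by_cases hj : j < m
  · simpa [extend, hj, hij.trans_lt hj] using ha (Fin.mk_le_mk.mpr hij)
  · simpa [extend, hj] using hnonneg a ha0 i

open scoped MatrixOrder in
/-- Lemma 3.5 of the paper: `log det(I_n + A B Aᵀ) ≤ ∑_i log(1 + σ_i(Aᵀ A) σ_i(B))`. -/
theorem stmt4 (n m : ℕ) (A : Matrix (Fin n) (Fin m) ℝ) (B : Matrix (Fin m) (Fin m) ℝ)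
    (hB : B.PosSemidef) :
    Real.log (1 + A * B * Aᵀ).det ≤ ∑ i, Real.log (1 + eigs (Aᵀ * A) i * eigs B i) := by
  set S := CFC.sqrt (Aᵀ * A)
  have hS : Sᵀ = S := (CFC.sqrt_nonneg (Aᵀ * A)).posSemidef.1
  have hC : (Aᵀ * A).PosSemidef := by
    simpa [conjTranspose_eq_transpose_of_trivial] using posSemidef_conjTranspose_mul_self A
  have hSS : S * S = Aᵀ * A := CFC.sqrt_mul_sqrt_self _ hC.nonneg
  have hM : (S * B * S).PosSemidef := hB.mul_mul_same_of_transpose_eq hS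
  have hdet : (1 + A * B * Aᵀ).det = (1 + S * B * S).det :=
    calc (1 + A * B * Aᵀ).det = (1 + Aᵀ * (A * B)).det := det_one_add_mul_comm _ _
      _ = (1 + S * (S * B)).det := by rw [← Matrix.mul_assoc, ← Matrix.mul_assoc, hSS]
      _ = (1 + S * B * S).det := det_one_add_mul_comm _ _
  rw [hdet, det_one_add_eq_prod_one_add_eigs hM.1,
    Real.log_prod fun i _ => by have := eigs_nonneg hM i; positivity]
  exact sum_log_one_add_le_of_prod_le (eigs_nonneg hM) (eigs_antitone hM.1)
    (fun i => mul_nonneg (eigs_nonneg hC i) (eigs_nonneg hB i))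
    fun k hk => hSS ▸ prod_eigs_mul_mul_le hk hS hB
end

section
/- Let M̂ ∈ ℝ^{d×d} be symmetric positive semidefinite with rank at most k and largest eigenvalue ζ_1. Let E ∈ ℝ^{d×d} be symmetric positive semidefinite with eigenvalues e_1 ≥ e_2 ≥ … ≥ e_d ≥ 0 in non-increasing order. Let W ∈ ℝ^{r×d} satisfy W Wᵀ = I_r. Let G, Ĝ ∈ ℝ^{r×r} be symmetric positive definite with G − Ĝ = W E Wᵀ, with G − σ² I_r and Ĝ − σ² I_r positive semidefinite for some σ² > 0, and let L, L̂ ∈ ℝ^{r×r} satisfy L Lᵀ = G^{-1} and L̂ L̂ᵀ = Ĝ^{-1}. Then |(1/2)·log det(I_r + Lᵀ W M̂ Wᵀ L) − (1/2)·log det(I_r + L̂ᵀ W M̂ Wᵀ L̂)| ≤ (1/2)·Σ_{i=1}^k log(1 + e_i ζ_1 / σ⁴). -/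
open Matrix

/-!
Put `A = W M̂ Wᵀ` and `Δ = W E Wᵀ`, so that `G = Ĝ + Δ`. Since `L Lᵀ = G⁻¹`, Sylvester's
identity `det (1 + X Y) = det (1 + Y X)` turns the two determinants into `det (1 + A G⁻¹)` and
`det (1 + A Ĝ⁻¹)`. In the Loewner order `G⁻¹ ≤ Ĝ⁻¹`, which fixes the sign of the difference.
Splitting `Ĝ⁻¹ = G⁻¹ + (Ĝ⁻¹ - G⁻¹)`, using `det (1 + S + T) ≤ det (1 + S) det (1 + T)` for
positive semidefinite `S, T` and `Ĝ⁻¹ - G⁻¹ ≤ Ĝ⁻¹ Δ Ĝ⁻¹`, the difference is at most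
`log det (1 + A Ĝ⁻¹ Δ Ĝ⁻¹) = log det (1 + E N)` with `N = Wᵀ Ĝ⁻¹ A Ĝ⁻¹ W`. Now `N` has rank at
most `k` and `N ≤ ζ₁ / σ⁴`, so `X = E^{1/2} N E^{1/2}` has rank at most `k` and `X ≤ (ζ₁ / σ⁴) E`;
by Courant–Fischer its eigenvalues are at most `ζ₁ e_i / σ⁴`, and they vanish beyond the `k`-th.
-/

open scoped MatrixOrder

namespace Matrix

variable {m n : Type*}

lemma PosSemidef.transpose_eq {A : Matrix n n ℝ} (hA : A.PosSemidef) : Aᵀ = A := by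
  simpa [conjTranspose_eq_transpose_of_trivial] using hA.isHermitian.eq

variable [Fintype m] [Fintype n]

lemma posSemidef_transpose_mul_self (A : Matrix m n ℝ) : (Aᵀ * A).PosSemidef := by
  simpa only [conjTranspose_eq_transpose_of_trivial] using posSemidef_conjTranspose_mul_self A

lemma PosSemidef.mul_mul_transpose_same {A : Matrix n n ℝ} (hA : A.PosSemidef)
    (C : Matrix m n ℝ) : (C * A * Cᵀ).PosSemidef := by
  simpa [conjTranspose_eq_transpose_of_trivial] using hA.mul_mul_conjTranspose_same C

lemma mul_mul_transpose_le_mul_mul_transpose {A B : Matrix n n ℝ} (h : A ≤ B)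
    (C : Matrix m n ℝ) : C * A * Cᵀ ≤ C * B * Cᵀ := by
  rw [le_iff, ← Matrix.sub_mul, ← Matrix.mul_sub]
  exact (le_iff.mp h).mul_mul_transpose_same C

lemma rank_mul_mul_le (B : Matrix m n ℝ) (A : Matrix n n ℝ) (C : Matrix n m ℝ) :
    (B * A * C).rank ≤ A.rank :=
  (rank_mul_le_left _ _).trans (rank_mul_le_right _ _)

lemma PosSemidef.nonneg_of_mulVec_eq_smul {M : Matrix n n ℝ} (hM : M.PosSemidef) {μ : ℝ}
    {v : n → ℝ} (hv : v ≠ 0) (h : M *ᵥ v = μ • v) : 0 ≤ μ := by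
  have hvv : 0 < v ⬝ᵥ v := by simpa using dotProduct_star_self_pos_iff.mpr hv
  have := hM.dotProduct_mulVec_nonneg v
  rw [star_trivial, h, dotProduct_smul, smul_eq_mul] at this
  exact nonneg_of_mul_nonneg_left this hvv

lemma exists_ne_zero_mulVec_eq_zero_on (A B : Matrix n n ℝ) (p q : n → Prop)
    [DecidablePred p] [DecidablePred q]
    (h : Fintype.card {j // p j} + Fintype.card {j // q j} < Fintype.card n) :
    ∃ x : n → ℝ, x ≠ 0 ∧ (∀ j, p j → (A *ᵥ x) j = 0) ∧ ∀ j, q j → (B *ᵥ x) j = 0 := by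
  let f := (LinearMap.funLeft ℝ ℝ (Subtype.val : {j // p j} → n) ∘ₗ A.mulVecLin).prod
    (LinearMap.funLeft ℝ ℝ (Subtype.val : {j // q j} → n) ∘ₗ B.mulVecLin)
  have hf : Module.finrank ℝ (({j // p j} → ℝ) × ({j // q j} → ℝ)) <
      Module.finrank ℝ (n → ℝ) := by
    simpa [Module.finrank_prod] using h
  obtain ⟨x, hx, hx0⟩ := (Submodule.ne_bot_iff _).mp (LinearMap.ker_ne_bot_of_finrank_lt hf)
  have hfx : f x = 0 := hx
  exact ⟨x, hx0, fun j hj => congrFun (congrArg Prod.fst hfx) ⟨j, hj⟩,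
    fun j hj => congrFun (congrArg Prod.snd hfx) ⟨j, hj⟩⟩

lemma det_one_add_transpose_mul_mul [DecidableEq m] [DecidableEq n] (R : Matrix m n ℝ)
    (Y : Matrix n n ℝ) : (1 + Rᵀ * R * Y).det = (1 + R * Y * Rᵀ).det := by
  rw [Matrix.mul_assoc, det_one_add_mul_comm, Matrix.mul_assoc]

lemma det_one_add_mul_mul_mul_transpose [DecidableEq m] [DecidableEq n] (A : Matrix m m ℝ)
    (P : Matrix m n ℝ) (E : Matrix n n ℝ) :
    (1 + A * (P * E * Pᵀ)).det = (1 + E * (Pᵀ * A * P)).det := by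
  rw [← Matrix.mul_assoc, det_one_add_mul_comm, ← Matrix.mul_assoc, ← Matrix.mul_assoc,
    det_one_add_mul_comm]

lemma transpose_mul_le_one [DecidableEq m] [DecidableEq n] {W : Matrix m n ℝ}
    (hW : W * Wᵀ = 1) : Wᵀ * W ≤ 1 := by
  have hP : (1 - Wᵀ * W)ᵀ = 1 - Wᵀ * W := by simp [transpose_sub]
  have hidem : (1 - Wᵀ * W)ᵀ * (1 - Wᵀ * W) = 1 - Wᵀ * W := by
    rw [hP]
    simp only [Matrix.sub_mul, Matrix.mul_sub, Matrix.one_mul, Matrix.mul_one, Matrix.mul_assoc,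
      ← Matrix.mul_assoc W Wᵀ W, hW]
    abel
  rw [le_iff, ← hidem]
  exact posSemidef_transpose_mul_self _

variable [DecidableEq n]

lemma PosSemidef.exists_symm_sqrt {A : Matrix n n ℝ} (hA : A.PosSemidef) :
    ∃ R : Matrix n n ℝ, Rᵀ = R ∧ Rᵀ * R = A :=
  ⟨CFC.sqrt A, (CFC.sqrt_nonneg A).posSemidef.transpose_eq, by
    rw [(CFC.sqrt_nonneg A).posSemidef.transpose_eq, CFC.sqrt_mul_sqrt_self A hA.nonneg]⟩

lemma IsHermitian.eigenvectorBasis_ne_zero {M : Matrix n n ℝ} (hM : M.IsHermitian) (j : n) :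
    (⇑(hM.eigenvectorBasis j) : n → ℝ) ≠ 0 := by
  simpa [← WithLp.ofLp_eq_zero] using hM.eigenvectorBasis.orthonormal.ne_zero j

lemma IsHermitian.le_smul_one_of_eigenvalues_le {M : Matrix n n ℝ} (hM : M.IsHermitian) {t : ℝ}
    (h : ∀ j, hM.eigenvalues j ≤ t) : M ≤ t • 1 := by
  rw [← Algebra.algebraMap_eq_smul_one]
  refine le_algebraMap_of_spectrum_le (fun x hx => ?_) hM.isSelfAdjoint
  obtain ⟨j, rfl⟩ := hM.spectrum_real_eq_range_eigenvalues ▸ hx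
  exact h j

lemma PosSemidef.nonneg_and_le_smul_one_of_isGreatest {M : Matrix n n ℝ} (hM : M.PosSemidef)
    {ζ : ℝ} (h : IsGreatest {μ : ℝ | ∃ v : n → ℝ, v ≠ 0 ∧ M *ᵥ v = μ • v} ζ) :
    0 ≤ ζ ∧ M ≤ ζ • 1 := by
  obtain ⟨v, hv0, hv⟩ := h.1
  exact ⟨hM.nonneg_of_mulVec_eq_smul hv0 hv, hM.isHermitian.le_smul_one_of_eigenvalues_le fun j =>
    h.2 ⟨_, hM.isHermitian.eigenvectorBasis_ne_zero j, hM.isHermitian.mulVec_eigenvectorBasis j⟩⟩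

lemma inv_sub_inv_eq {A B : Matrix n n ℝ} (hA : IsUnit A.det) (hB : IsUnit B.det) :
    A⁻¹ - B⁻¹ = B⁻¹ * (B - A) * B⁻¹ + B⁻¹ * (B - A) * A⁻¹ * ((B - A) * B⁻¹) := by
  simp only [Matrix.sub_mul, Matrix.mul_sub, Matrix.mul_assoc, mul_nonsing_inv _ hA,
    mul_nonsing_inv _ hB, nonsing_inv_mul_cancel_left _ _ hA, nonsing_inv_mul_cancel_left _ _ hB,
    Matrix.mul_one]
  abel

lemma PosDef.inv_le_inv_of_le {A B : Matrix n n ℝ} (hA : A.PosDef) (h : A ≤ B) :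
    B⁻¹ ≤ A⁻¹ := by
  have hB : B.PosDef := by simpa using hA.add_posSemidef (le_iff.mp h)
  have hBsymm : (B⁻¹)ᵀ = B⁻¹ := hB.inv.posSemidef.transpose_eq
  have hDsymm : (B - A)ᵀ = B - A := (le_iff.mp h).transpose_eq
  rw [le_iff, inv_sub_inv_eq (isUnit_iff_ne_zero.mpr hA.det_pos.ne')
    (isUnit_iff_ne_zero.mpr hB.det_pos.ne')]
  have h1 := (le_iff.mp h).mul_mul_transpose_same B⁻¹
  have h2 := hA.inv.posSemidef.mul_mul_transpose_same (B⁻¹ * (B - A))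
  rw [hBsymm] at h1
  rw [transpose_mul, hBsymm, hDsymm] at h2
  exact h1.add h2

lemma PosDef.inv_sub_inv_le {A B : Matrix n n ℝ} (hA : A.PosDef) (hB : B.PosDef) :
    A⁻¹ - B⁻¹ ≤ A⁻¹ * (B - A) * A⁻¹ := by
  have hC : (A⁻¹ - B⁻¹)ᵀ = A⁻¹ - B⁻¹ := by
    rw [transpose_sub, hA.inv.posSemidef.transpose_eq, hB.inv.posSemidef.transpose_eq]
  have hAu : IsUnit A.det := isUnit_iff_ne_zero.mpr hA.det_pos.ne'
  have hBu : IsUnit B.det := isUnit_iff_ne_zero.mpr hB.det_pos.ne'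
  have e : A⁻¹ * (B - A) * A⁻¹ - (A⁻¹ - B⁻¹) = (A⁻¹ - B⁻¹) * B * (A⁻¹ - B⁻¹)ᵀ := by
    rw [hC]
    simp only [Matrix.sub_mul, Matrix.mul_sub, Matrix.mul_assoc, mul_nonsing_inv _ hAu,
      mul_nonsing_inv _ hBu, nonsing_inv_mul_cancel_left _ _ hBu, Matrix.mul_one]
  rw [le_iff, e]
  exact hB.posSemidef.mul_mul_transpose_same _

lemma inv_mul_inv_le_of_smul_one_le {σ : ℝ} (hσ : 0 < σ) {G : Matrix n n ℝ}
    (h : σ • 1 ≤ G) : G⁻¹ * G⁻¹ ≤ (σ * σ)⁻¹ • 1 := by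
  have hsq : (σ * σ) • 1 ≤ G * G := by
    have e : G * G - (σ * σ) • 1 = (G - σ • 1)ᵀ * (G - σ • 1) + (2 * σ) • (G - σ • 1) := by
      rw [(le_iff.mp h).transpose_eq]
      simp only [Matrix.sub_mul, Matrix.mul_sub, Matrix.smul_mul, Matrix.mul_smul, Matrix.one_mul,
        Matrix.mul_one, smul_sub, smul_smul]
      module
    rw [le_iff, e]
    exact (posSemidef_transpose_mul_self _).add ((le_iff.mp h).smul (by positivity))
  have hpos : ((σ * σ) • 1 : Matrix n n ℝ).PosDef := PosDef.one.smul (by positivity)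
  have hinv : ((σ * σ) • 1 : Matrix n n ℝ)⁻¹ = (σ * σ)⁻¹ • 1 := by
    refine inv_eq_left_inv ?_
    rw [smul_mul_smul_comm, inv_mul_cancel₀ (by positivity), Matrix.mul_one, one_smul]
  simpa [hinv, Matrix.mul_inv_rev] using hpos.inv_le_inv_of_le hsq

lemma transpose_mul_mul_le_smul_one [DecidableEq m] {M : Matrix n n ℝ} {W : Matrix m n ℝ}
    {G : Matrix m m ℝ} {ζ σ : ℝ} (hM : M ≤ ζ • 1) (hζ : 0 ≤ ζ) (hW : W * Wᵀ = 1) (hσ : 0 < σ)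
    (hG : σ • 1 ≤ G) :
    (G⁻¹ * W)ᵀ * (W * M * Wᵀ) * (G⁻¹ * W) ≤ (ζ / (σ * σ)) • 1 := by
  have hGsymm : (G⁻¹)ᵀ = G⁻¹ := by
    have := (le_iff.mp hG).transpose_eq
    rw [transpose_sub, transpose_smul, transpose_one, sub_left_inj] at this
    rw [transpose_nonsing_inv, this]
  set C := (G⁻¹ * W)ᵀ * W
  calc (G⁻¹ * W)ᵀ * (W * M * Wᵀ) * (G⁻¹ * W) = C * M * Cᵀ := by
        simp only [C, transpose_mul, transpose_transpose, Matrix.mul_assoc]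
    _ ≤ C * (ζ • 1) * Cᵀ := mul_mul_transpose_le_mul_mul_transpose hM C
    _ = ζ • (Wᵀ * (G⁻¹ * G⁻¹) * Wᵀᵀ) := by
        simp only [C, transpose_mul, transpose_transpose, hGsymm, Matrix.mul_smul, Matrix.smul_mul,
          Matrix.mul_one, Matrix.mul_assoc, ← Matrix.mul_assoc W Wᵀ, hW, Matrix.one_mul]
    _ ≤ ζ • (Wᵀ * ((σ * σ)⁻¹ • 1) * Wᵀᵀ) := smul_le_smul_of_nonneg_left
        (mul_mul_transpose_le_mul_mul_transpose (inv_mul_inv_le_of_smul_one_le hσ hG) Wᵀ) hζ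
    _ = (ζ / (σ * σ)) • (Wᵀ * W) := by
        simp only [Matrix.mul_smul, Matrix.smul_mul, Matrix.mul_one, transpose_transpose, smul_smul,
          div_eq_mul_inv]
    _ ≤ (ζ / (σ * σ)) • 1 := smul_le_smul_of_nonneg_left (transpose_mul_le_one hW) (by positivity)

namespace IsHermitian

variable {X : Matrix n n ℝ} (hX : X.IsHermitian)

lemma eq_mul_diagonal_mul_transpose :
    X = (hX.eigenvectorUnitary : Matrix n n ℝ) * diagonal hX.eigenvalues *
      (hX.eigenvectorUnitary : Matrix n n ℝ)ᵀ := by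
  conv_lhs => rw [hX.spectral_theorem]
  simp [Unitary.conjStarAlgAut_apply, star_eq_conjTranspose, conjTranspose_eq_transpose_of_trivial]

lemma dotProduct_mulVec_eq_sum (x : n → ℝ) :
    x ⬝ᵥ X *ᵥ x =
      ∑ j, hX.eigenvalues j * ((hX.eigenvectorUnitary : Matrix n n ℝ)ᵀ *ᵥ x) j ^ 2 := by
  conv_lhs => rw [hX.eq_mul_diagonal_mul_transpose]
  rw [← mulVec_mulVec, ← mulVec_mulVec, dotProduct_mulVec, ← mulVec_transpose]
  simp only [mulVec_diagonal, dotProduct]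
  exact Finset.sum_congr rfl fun j _ => by ring

lemma dotProduct_self_eq_sum (x : n → ℝ) :
    x ⬝ᵥ x = ∑ j, ((hX.eigenvectorUnitary : Matrix n n ℝ)ᵀ *ᵥ x) j ^ 2 := by
  have hU :
      (hX.eigenvectorUnitary : Matrix n n ℝ) * (hX.eigenvectorUnitary : Matrix n n ℝ)ᵀ = 1 := by
    simpa [star_eq_conjTranspose, conjTranspose_eq_transpose_of_trivial] using
      Unitary.coe_mul_star_self hX.eigenvectorUnitary
  have h : (hX.eigenvectorUnitary : Matrix n n ℝ)ᵀ *ᵥ x ⬝ᵥ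
      (hX.eigenvectorUnitary : Matrix n n ℝ)ᵀ *ᵥ x = x ⬝ᵥ x := by
    rw [dotProduct_mulVec, vecMul_transpose, mulVec_mulVec, hU, one_mulVec]
  rw [← h]
  simp only [dotProduct, sq]

lemma mul_dotProduct_self_le {t : ℝ} {x : n → ℝ}
    (hx : ∀ j, hX.eigenvalues j < t → ((hX.eigenvectorUnitary : Matrix n n ℝ)ᵀ *ᵥ x) j = 0) :
    t * (x ⬝ᵥ x) ≤ x ⬝ᵥ X *ᵥ x := by
  rw [hX.dotProduct_mulVec_eq_sum, hX.dotProduct_self_eq_sum, Finset.mul_sum]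
  refine Finset.sum_le_sum fun j _ => ?_
  rcases lt_or_ge (hX.eigenvalues j) t with h | h
  · simp [hx j h]
  · exact mul_le_mul_of_nonneg_right h (sq_nonneg _)

lemma dotProduct_mulVec_le_mul {t : ℝ} {x : n → ℝ}
    (hx : ∀ j, t < hX.eigenvalues j → ((hX.eigenvectorUnitary : Matrix n n ℝ)ᵀ *ᵥ x) j = 0) :
    x ⬝ᵥ X *ᵥ x ≤ t * (x ⬝ᵥ x) := by
  rw [hX.dotProduct_mulVec_eq_sum, hX.dotProduct_self_eq_sum, Finset.mul_sum]
  refine Finset.sum_le_sum fun j _ => ?_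
  rcases lt_or_ge t (hX.eigenvalues j) with h | h
  · simp [hx j h]
  · exact mul_le_mul_of_nonneg_right h (sq_nonneg _)

end IsHermitian

end Matrix

section eigs

variable {d : ℕ} {X E : Matrix (Fin d) (Fin d) ℝ}

lemma exists_equiv_eigs_eq (hX : X.IsHermitian) :
    ∃ e : Fin d ≃ Fin d, ∀ i, eigs X i = hX.eigenvalues (e i) :=
  ⟨Fin.revPerm.trans (Tuple.sort hX.eigenvalues), fun i => by rw [eigs, dif_pos hX]; rfl⟩

lemma eigs_antitone_s11 (hX : X.IsHermitian) : Antitone (eigs X) := fun i j hij => by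
  simp only [eigs, dif_pos hX, Function.comp_apply]
  exact Tuple.monotone_sort hX.eigenvalues (Fin.rev_le_rev.mpr hij)

lemma eigs_nonneg_s11 (hX : X.PosSemidef) (i : Fin d) : 0 ≤ eigs X i := by
  obtain ⟨e, he⟩ := exists_equiv_eigs_eq hX.isHermitian
  exact he i ▸ hX.eigenvalues_nonneg _

lemma card_eigs_subtype (hX : X.IsHermitian) (p : ℝ → Prop) [DecidablePred p] :
    Fintype.card {i // p (eigs X i)} = Fintype.card {j // p (hX.eigenvalues j)} := by
  obtain ⟨e, he⟩ := exists_equiv_eigs_eq hX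
  exact Fintype.card_congr (e.subtypeEquiv fun i => by rw [he])

lemma det_one_add_eq_prod_eigs (hX : X.IsHermitian) : (1 + X).det = ∏ i, (1 + eigs X i) := by
  obtain ⟨e, he⟩ := exists_equiv_eigs_eq hX
  have h : 1 + X = cfc (fun t : ℝ => 1 + t) X := by
    rw [cfc_const_add (1 : ℝ) (fun t => t) X, cfc_id' ℝ X, Algebra.algebraMap_eq_smul_one,
      one_smul]
  rw [h, hX.cfc_eq]
  simp only [he, e.prod_comp fun j => 1 + hX.eigenvalues j]
  simp [IsHermitian.cfc, -Unitary.conjStarAlgAut_apply]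

lemma eigs_eq_zero_of_rank_le (hX : X.PosSemidef) {k : ℕ} (hk : X.rank ≤ k) {i : Fin d}
    (hi : k ≤ i) : eigs X i = 0 := by
  by_contra hne
  have hpos : ∀ j ≤ i, eigs X j ≠ 0 := fun j hj =>
    ((eigs_nonneg_s11 hX i).lt_of_ne' hne |>.trans_le (eigs_antitone_s11 hX.isHermitian hj)).ne'
  have hcard : (i : ℕ) + 1 ≤ X.rank := by
    rw [hX.isHermitian.rank_eq_card_non_zero_eigs, ← card_eigs_subtype hX.isHermitian (· ≠ 0),
      ← Fin.card_Iic, ← Fintype.card_coe]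
    convert Fintype.card_subtype_mono _ _ fun j hj => hpos j (Finset.mem_Iic.mp hj)
  omega

lemma card_eigenvalues_lt_eigs_le (hX : X.IsHermitian) (i : Fin d) :
    Fintype.card {j // hX.eigenvalues j < eigs X i} ≤ d - 1 - i := by
  rw [← card_eigs_subtype hX (· < eigs X i), ← Fin.card_Ioi, ← Fintype.card_coe]
  convert Fintype.card_subtype_mono _ _ fun j (hj : eigs X j < eigs X i) =>
    Finset.mem_Ioi.mpr (lt_of_not_ge fun hji => hj.not_ge (eigs_antitone_s11 hX hji))

lemma card_eigs_lt_eigenvalues_le (hX : X.IsHermitian) (i : Fin d) :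
    Fintype.card {j // eigs X i < hX.eigenvalues j} ≤ i := by
  rw [← card_eigs_subtype hX (eigs X i < ·), ← Fin.card_Iio, ← Fintype.card_coe]
  convert Fintype.card_subtype_mono _ _ fun j (hj : eigs X i < eigs X j) =>
    Finset.mem_Iio.mpr (lt_of_not_ge fun hij => hj.not_ge (eigs_antitone_s11 hX hij))

/-- Courant–Fischer: a nonzero vector orthogonal to the eigenvectors of `X` below `eigs X i` and
to those of `E` above `eigs E i` exists by counting dimensions, and its Rayleigh quotients
compare the two eigenvalues. -/
lemma eigs_le_mul_eigs_of_le_smul (hX : X.IsHermitian) (hE : E.IsHermitian) {c : ℝ}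
    (hc : 0 ≤ c) (h : X ≤ c • E) (i : Fin d) : eigs X i ≤ c * eigs E i := by
  obtain ⟨x, hx0, hxX, hxE⟩ := exists_ne_zero_mulVec_eq_zero_on
    (hX.eigenvectorUnitary : Matrix (Fin d) (Fin d) ℝ)ᵀ
    (hE.eigenvectorUnitary : Matrix (Fin d) (Fin d) ℝ)ᵀ
    (hX.eigenvalues · < eigs X i) (eigs E i < hE.eigenvalues ·)
    (by have := card_eigenvalues_lt_eigs_le hX i; have := card_eigs_lt_eigenvalues_le hE i
        simp only [Fintype.card_fin]; omega)
  have hxx : 0 < x ⬝ᵥ x := by simpa using dotProduct_star_self_pos_iff.mpr hx0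
  have hquad : x ⬝ᵥ X *ᵥ x ≤ c * (x ⬝ᵥ E *ᵥ x) := by
    simpa [sub_mulVec, smul_mulVec, dotProduct_sub] using (le_iff.mp h).dotProduct_mulVec_nonneg x
  refine le_of_mul_le_mul_right ?_ hxx
  calc eigs X i * (x ⬝ᵥ x) ≤ x ⬝ᵥ X *ᵥ x := hX.mul_dotProduct_self_le hxX
    _ ≤ c * (x ⬝ᵥ E *ᵥ x) := hquad
    _ ≤ c * (eigs E i * (x ⬝ᵥ x)) := mul_le_mul_of_nonneg_left (hE.dotProduct_mulVec_le_mul hxE) hc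
    _ = c * eigs E i * (x ⬝ᵥ x) := (mul_assoc _ _ _).symm

lemma det_one_add_le_prod_of_le_smul (hX : X.PosSemidef) (hE : E.IsHermitian) {k : ℕ}
    (hk : X.rank ≤ k) {c : ℝ} (hc : 0 ≤ c) (h : X ≤ c • E) :
    (1 + X).det ≤ ∏ i ∈ Finset.univ.filter (fun i : Fin d => (i : ℕ) < k), (1 + eigs E i * c) := by
  have hone : ∀ i ∈ Finset.univ, 1 + eigs X i ≠ 1 → (i : ℕ) < k := fun i _ hi =>
    lt_of_not_ge fun hik => hi (by rw [eigs_eq_zero_of_rank_le hX hk hik, add_zero])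
  rw [det_one_add_eq_prod_eigs hX.isHermitian, ← Finset.prod_filter_of_ne hone]
  refine Finset.prod_le_prod (fun i _ => by linarith [eigs_nonneg_s11 hX i]) fun i _ => ?_
  linarith [eigs_le_mul_eigs_of_le_smul hX.isHermitian hE hc h i]

end eigs

section det

variable {r : ℕ} {S T A Q Δ Y Y' : Matrix (Fin r) (Fin r) ℝ}

lemma det_one_add_le_det_one_add (hS : S.PosSemidef) (h : S ≤ T) :
    (1 + S).det ≤ (1 + T).det := by
  have hT : T.PosSemidef := by simpa using hS.add (le_iff.mp h)
  rw [det_one_add_eq_prod_eigs hS.isHermitian, det_one_add_eq_prod_eigs hT.isHermitian]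
  refine Finset.prod_le_prod (fun i _ => by linarith [eigs_nonneg_s11 hS i]) fun i _ => ?_
  simpa using eigs_le_mul_eigs_of_le_smul hS.isHermitian hT.isHermitian zero_le_one
    (by rwa [one_smul]) i

lemma one_le_det_one_add (hS : S.PosSemidef) : 1 ≤ (1 + S).det := by
  simpa using det_one_add_le_det_one_add PosSemidef.zero hS.nonneg

/-- With `T = Rᵀ R`, `det (1 + S + T) = det (1 + S) * det (1 + R (1 + S)⁻¹ Rᵀ)` and
`(1 + S)⁻¹ ≤ 1`. -/
lemma det_one_add_add_le_mul (hS : S.PosSemidef) (hT : T.PosSemidef) :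
    (1 + (S + T)).det ≤ (1 + S).det * (1 + T).det := by
  obtain ⟨R, -, rfl⟩ := hT.exists_symm_sqrt
  have hQ : (1 + S).PosDef := PosDef.one.add_posSemidef hS
  have hsplit : (1 + (S + Rᵀ * R)).det = (1 + S).det * (1 + R * (1 + S)⁻¹ * Rᵀ).det := by
    have e : 1 + (S + Rᵀ * R) = (1 + S) * (1 + (1 + S)⁻¹ * Rᵀ * R) := by
      rw [Matrix.mul_add, Matrix.mul_one, Matrix.mul_assoc,
        mul_nonsing_inv_cancel_left _ _ (isUnit_iff_ne_zero.mpr hQ.det_pos.ne'), add_assoc]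
    rw [e, det_mul, det_one_add_mul_comm, ← Matrix.mul_assoc]
  have hle : R * (1 + S)⁻¹ * Rᵀ ≤ R * 1 * Rᵀ := by
    refine mul_mul_transpose_le_mul_mul_transpose ?_ R
    simpa using PosDef.one.inv_le_inv_of_le (le_add_of_nonneg_right hS.nonneg)
  rw [hsplit, ← Matrix.mul_one (Rᵀ * R), det_one_add_transpose_mul_mul]
  exact mul_le_mul_of_nonneg_left
    (det_one_add_le_det_one_add (hQ.inv.posSemidef.mul_mul_transpose_same R) hle) hQ.det_pos.le

lemma one_le_det_one_add_mul (hA : A.PosSemidef) (hY : Y.PosSemidef) : 1 ≤ (1 + A * Y).det := by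
  obtain ⟨R, -, rfl⟩ := hA.exists_symm_sqrt
  rw [det_one_add_transpose_mul_mul]
  exact one_le_det_one_add (hY.mul_mul_transpose_same R)

lemma det_one_add_mul_le_of_le (hA : A.PosSemidef) (hY : Y.PosSemidef) (h : Y ≤ Y') :
    (1 + A * Y).det ≤ (1 + A * Y').det := by
  obtain ⟨R, -, rfl⟩ := hA.exists_symm_sqrt
  simp only [det_one_add_transpose_mul_mul]
  exact det_one_add_le_det_one_add (hY.mul_mul_transpose_same R)
    (mul_mul_transpose_le_mul_mul_transpose h R)

lemma det_one_add_mul_add_le (hA : A.PosSemidef) (hY : Y.PosSemidef) (hY' : Y'.PosSemidef) :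
    (1 + A * (Y + Y')).det ≤ (1 + A * Y).det * (1 + A * Y').det := by
  obtain ⟨R, -, rfl⟩ := hA.exists_symm_sqrt
  simp only [det_one_add_transpose_mul_mul]
  rw [Matrix.mul_add, Matrix.add_mul]
  exact det_one_add_add_le_mul (hY.mul_mul_transpose_same R) (hY'.mul_mul_transpose_same R)

lemma det_one_add_mul_inv_add_le (hA : A.PosSemidef) (hQ : Q.PosDef) (hΔ : Δ.PosSemidef) :
    (1 + A * (Q + Δ)⁻¹).det ≤ (1 + A * Q⁻¹).det :=
  det_one_add_mul_le_of_le hA (hQ.add_posSemidef hΔ).inv.posSemidef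
    (hQ.inv_le_inv_of_le (le_add_of_nonneg_right hΔ.nonneg))

lemma det_one_add_mul_inv_le_mul (hA : A.PosSemidef) (hQ : Q.PosDef) (hΔ : Δ.PosSemidef) :
    (1 + A * Q⁻¹).det ≤ (1 + A * (Q + Δ)⁻¹).det * (1 + A * (Q⁻¹ * Δ * Q⁻¹)).det := by
  have hP : (Q + Δ).PosDef := hQ.add_posSemidef hΔ
  have hdiff : (Q⁻¹ - (Q + Δ)⁻¹).PosSemidef :=
    le_iff.mp (hQ.inv_le_inv_of_le (le_add_of_nonneg_right hΔ.nonneg))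
  calc (1 + A * Q⁻¹).det = (1 + A * ((Q + Δ)⁻¹ + (Q⁻¹ - (Q + Δ)⁻¹))).det := by
        rw [add_sub_cancel]
    _ ≤ (1 + A * (Q + Δ)⁻¹).det * (1 + A * (Q⁻¹ - (Q + Δ)⁻¹)).det :=
        det_one_add_mul_add_le hA hP.inv.posSemidef hdiff
    _ ≤ (1 + A * (Q + Δ)⁻¹).det * (1 + A * (Q⁻¹ * Δ * Q⁻¹)).det := by
        refine mul_le_mul_of_nonneg_left ?_
          (zero_le_one.trans (one_le_det_one_add_mul hA hP.inv.posSemidef))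
        simpa using det_one_add_mul_le_of_le hA hdiff (hQ.inv_sub_inv_le hP)

end det

lemma det_one_add_mul_le_prod_eigs {d : ℕ} {E N : Matrix (Fin d) (Fin d) ℝ} (hE : E.PosSemidef)
    (hN : N.PosSemidef) {k : ℕ} (hk : N.rank ≤ k) {c : ℝ} (hc : 0 ≤ c) (h : N ≤ c • 1) :
    (1 + E * N).det ≤
      ∏ i ∈ Finset.univ.filter (fun i : Fin d => (i : ℕ) < k), (1 + eigs E i * c) := by
  obtain ⟨R, hR, rfl⟩ := hE.exists_symm_sqrt
  rw [det_one_add_transpose_mul_mul]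
  refine det_one_add_le_prod_of_le_smul (hN.mul_mul_transpose_same R) hE.isHermitian
    ((rank_mul_mul_le _ _ _).trans hk) hc ?_
  simpa [hR] using mul_mul_transpose_le_mul_mul_transpose h R

lemma abs_half_log_sub_half_log_le {a b p : ℝ} (ha : 0 < a) (hab : a ≤ b) (hbp : b ≤ a * p) :
    |1 / 2 * Real.log a - 1 / 2 * Real.log b| ≤ 1 / 2 * Real.log p := by
  have hp : 0 < p := pos_of_mul_pos_right (ha.trans_le (hab.trans hbp)) ha.le
  have hlog : Real.log b ≤ Real.log a + Real.log p := by
    rw [← Real.log_mul ha.ne' hp.ne']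
    exact Real.log_le_log (ha.trans_le hab) hbp
  rw [abs_of_nonpos (by linarith [Real.log_le_log ha hab])]
  linarith

theorem stmt11_general (d r k : ℕ)
    (Mhat : Matrix (Fin d) (Fin d) ℝ) (hMhat : Mhat.PosSemidef)
    (hrank : Mhat.rank ≤ k)
    (ζ1 : ℝ)
    (hζ1 : IsGreatest {μ : ℝ | ∃ v : Fin d → ℝ, v ≠ 0 ∧ Mhat *ᵥ v = μ • v} ζ1)
    (E : Matrix (Fin d) (Fin d) ℝ) (hE : E.PosSemidef)
    (W : Matrix (Fin r) (Fin d) ℝ) (hW : W * Wᵀ = 1)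
    (G Ghat : Matrix (Fin r) (Fin r) ℝ) (hGhat : Ghat.PosDef)
    (hGG : G - Ghat = W * E * Wᵀ)
    (σ2 : ℝ) (hσ2 : 0 < σ2)
    (hGhatσ : (Ghat - σ2 • (1 : Matrix (Fin r) (Fin r) ℝ)).PosSemidef)
    (L Lhat : Matrix (Fin r) (Fin r) ℝ)
    (hL : L * Lᵀ = G⁻¹) (hLhat : Lhat * Lhatᵀ = Ghat⁻¹) :
    |(1 / 2) * Real.log (1 + Lᵀ * W * Mhat * Wᵀ * L).det -
        (1 / 2) * Real.log (1 + Lhatᵀ * W * Mhat * Wᵀ * Lhat).det| ≤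
      (1 / 2) * ∑ i ∈ Finset.univ.filter (fun i : Fin d => (i : ℕ) < k),
          Real.log (1 + eigs E i * ζ1 / (σ2 * σ2)) := by
  set A := W * Mhat * Wᵀ
  have hA : A.PosSemidef := hMhat.mul_mul_transpose_same W
  have hΔ : (W * E * Wᵀ).PosSemidef := hE.mul_mul_transpose_same W
  have hdet {L G : Matrix (Fin r) (Fin r) ℝ} (hL : L * Lᵀ = G⁻¹) :
      (1 + Lᵀ * W * Mhat * Wᵀ * L).det = (1 + A * G⁻¹).det := by
    rw [show Lᵀ * W * Mhat * Wᵀ * L = Lᵀ * (A * L) by simp only [A, Matrix.mul_assoc],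
      det_one_add_mul_comm, Matrix.mul_assoc, hL]
  obtain ⟨hζ, hMζ⟩ := hMhat.nonneg_and_le_smul_one_of_isGreatest hζ1
  have hbound : (1 + A * (Ghat⁻¹ * (W * E * Wᵀ) * Ghat⁻¹)).det ≤
      ∏ i ∈ Finset.univ.filter (fun i : Fin d => (i : ℕ) < k),
        (1 + eigs E i * (ζ1 / (σ2 * σ2))) := by
    rw [show Ghat⁻¹ * (W * E * Wᵀ) * Ghat⁻¹ = (Ghat⁻¹ * W) * E * (Ghat⁻¹ * W)ᵀ by
      rw [transpose_mul, hGhat.inv.posSemidef.transpose_eq]; simp only [Matrix.mul_assoc],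
      det_one_add_mul_mul_mul_transpose]
    refine det_one_add_mul_le_prod_eigs hE (by simpa using hA.mul_mul_transpose_same (Ghat⁻¹ * W)ᵀ)
      ((rank_mul_mul_le _ _ _).trans ((rank_mul_mul_le _ _ _).trans hrank)) (by positivity)
      (transpose_mul_mul_le_smul_one hMζ hζ hW hσ2 hGhatσ)
  have hone_le := one_le_det_one_add_mul hA (hGhat.add_posSemidef hΔ).inv.posSemidef
  rw [hdet hL, hdet hLhat, eq_add_of_sub_eq' hGG]
  simp_rw [mul_div_assoc]
  rw [← Real.log_prod fun i _ => by have := eigs_nonneg_s11 hE i; positivity]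
  refine abs_half_log_sub_half_log_le (by linarith) (det_one_add_mul_inv_add_le hA hGhat hΔ) ?_
  exact (det_one_add_mul_inv_le_mul hA hGhat hΔ).trans
    (mul_le_mul_of_nonneg_left hbound (by linarith))

/-- Term (b) of the paper's error analysis: difference of log-dets under perturbation of
the effective noise covariance. -/
theorem stmt11 (d r k : ℕ)
    (Mhat : Matrix (Fin d) (Fin d) ℝ) (hMhat : Mhat.PosSemidef)
    (hrank : Mhat.rank ≤ k)
    (ζ1 : ℝ)
    (hζ1 : IsGreatest {μ : ℝ | ∃ v : Fin d → ℝ, v ≠ 0 ∧ Mhat *ᵥ v = μ • v} ζ1)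
    (E : Matrix (Fin d) (Fin d) ℝ) (hE : E.PosSemidef)
    (W : Matrix (Fin r) (Fin d) ℝ) (hW : W * Wᵀ = 1)
    (G Ghat : Matrix (Fin r) (Fin r) ℝ) (hG : G.PosDef) (hGhat : Ghat.PosDef)
    (hGG : G - Ghat = W * E * Wᵀ)
    (σ2 : ℝ) (hσ2 : 0 < σ2)
    (hGσ : (G - σ2 • (1 : Matrix (Fin r) (Fin r) ℝ)).PosSemidef)
    (hGhatσ : (Ghat - σ2 • (1 : Matrix (Fin r) (Fin r) ℝ)).PosSemidef)
    (L Lhat : Matrix (Fin r) (Fin r) ℝ)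
    (hL : L * Lᵀ = G⁻¹) (hLhat : Lhat * Lhatᵀ = Ghat⁻¹) :
    |(1 / 2) * Real.log (1 + Lᵀ * W * Mhat * Wᵀ * L).det -
        (1 / 2) * Real.log (1 + Lhatᵀ * W * Mhat * Wᵀ * Lhat).det| ≤
      (1 / 2) * ∑ i ∈ Finset.univ.filter (fun i : Fin d => (i : ℕ) < k),
          Real.log (1 + eigs E i * ζ1 / (σ2 * σ2)) :=
  stmt11_general d r k Mhat hMhat hrank ζ1 hζ1 E hE W hW G Ghat hGhat hGG σ2 hσ2 hGhatσ L Lhat hL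
    hLhat
end

section
/- Let μ be the multivariate Gaussian probability measure on ℝ^{d_m} with mean m_pr ∈ ℝ^{d_m} and symmetric positive definite covariance matrix Γ_pr ∈ ℝ^{d_m×d_m}. Let P ∈ ℝ^{d_ρ×d_m} be such that Σ_pr := P Γ_pr Pᵀ is invertible, and set P_† := Γ_pr Pᵀ Σ_pr^{-1}. Then, with m distributed according to μ, the random vectors m ↦ P m (with values in ℝ^{d_ρ}) and m ↦ (I_{d_m} − P_† P) m (with values in ℝ^{d_m}) are independent. -/
/-!
With `Q := P_† P`, the identity `P P_† = 1` makes `Q` idempotent and `Γ⁻¹ Q = Qᵀ Γ⁻¹` makes it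
self-adjoint for the inner product `Γ⁻¹`, so the quadratic form splits as
`q(y) = q(Q y) + q(y - Q y)` and the Gaussian density factors into a function of `P m` times a
function of `(I - Q) m`. The map `m ↦ (P m, (I - Q) m)` is a linear isomorphism onto
`ℝ^{d_ρ} × ker P`; it carries Lebesgue measure to a multiple of a product Haar measure, hence `μ`
to a product measure, under which the two coordinates are independent.
-/

open Matrix MeasureTheory ProbabilityTheory
open scoped ENNReal

def LinearMap.equivProdKerOfRightInverse {R M N : Type*} [Ring R] [AddCommGroup M] [Module R M]
    [AddCommGroup N] [Module R N] (p : M →ₗ[R] N) (r : N →ₗ[R] M) (h : ∀ y, p (r y) = y) :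
    M ≃ₗ[R] N × LinearMap.ker p where
  toFun x := (p x, ⟨x - r (p x), by simp [h]⟩)
  invFun z := r z.1 + z.2
  map_add' x y := by
    simp only [map_add, add_sub_add_comm, Prod.mk_add_mk, AddMemClass.mk_add_mk]
  map_smul' a x := by ext <;> simp [smul_sub]
  left_inv x := by simp
  right_inv z := by ext <;> simp [h]

theorem Matrix.dotProduct_mulVec_eq_add_of_mul_self {n R : Type*} [Fintype n] [CommRing R]
    {A Q : Matrix n n R} (hQ : Q * Q = Q) (hAQ : A * Q = Qᵀ * A) (y : n → R) :
    y ⬝ᵥ (A *ᵥ y) = Q *ᵥ y ⬝ᵥ (A *ᵥ (Q *ᵥ y)) + (y - Q *ᵥ y) ⬝ᵥ (A *ᵥ (y - Q *ᵥ y)) := by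
  have hadj : ∀ u w, Q *ᵥ u ⬝ᵥ (A *ᵥ w) = u ⬝ᵥ (A *ᵥ (Q *ᵥ w)) := fun u w ↦ by
    rw [← vecMul_transpose, dotProduct_mulVec, vecMul_vecMul, ← hAQ, ← dotProduct_mulVec,
      mulVec_mulVec]
  have hker : Q *ᵥ (y - Q *ᵥ y) = 0 := by rw [mulVec_sub, mulVec_mulVec, hQ, sub_self]
  have h₁ : Q *ᵥ y ⬝ᵥ (A *ᵥ (y - Q *ᵥ y)) = 0 := by
    rw [hadj, hker, mulVec_zero, dotProduct_zero]
  have h₂ : (y - Q *ᵥ y) ⬝ᵥ (A *ᵥ (Q *ᵥ y)) = 0 := by rw [← hadj, hker, zero_dotProduct]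
  conv_lhs => rw [← add_sub_cancel (Q *ᵥ y) y]
  rw [mulVec_add, dotProduct_add, add_dotProduct, add_dotProduct, h₁, h₂, add_zero, zero_add]

theorem Matrix.inv_mul_eq_transpose_mul_inv_of_isSymm {m n α : Type*} [Fintype m] [Fintype n]
    [DecidableEq m] [DecidableEq n] [CommRing α] {Γ : Matrix n n α} (hΓ : Γ.IsSymm)
    (hΓu : IsUnit Γ.det) (P : Matrix m n α) :
    Γ⁻¹ * (Γ * Pᵀ * (P * Γ * Pᵀ)⁻¹ * P) = (Γ * Pᵀ * (P * Γ * Pᵀ)⁻¹ * P)ᵀ * Γ⁻¹ := by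
  calc Γ⁻¹ * (Γ * Pᵀ * (P * Γ * Pᵀ)⁻¹ * P) = Pᵀ * (P * Γ * Pᵀ)⁻¹ * P := by
        simp only [← Matrix.mul_assoc, nonsing_inv_mul _ hΓu, Matrix.one_mul]
    _ = _ := by
        simp only [transpose_mul, transpose_transpose, transpose_nonsing_inv, hΓ.eq,
          Matrix.mul_assoc, mul_nonsing_inv _ hΓu, Matrix.mul_one]

theorem MeasurableEquiv.map_withDensity_comp {α β : Type*} [MeasurableSpace α] [MeasurableSpace β]
    (e : α ≃ᵐ β) (ν : Measure α) {h : β → ℝ≥0∞} (hh : Measurable h) :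
    (ν.withDensity (h ∘ e)).map e = (ν.map e).withDensity h := by
  ext s hs
  rw [Measure.map_apply e.measurable hs, withDensity_apply _ (e.measurable hs),
    withDensity_apply _ hs, setLIntegral_map hs hh e.measurable]
  rfl

theorem ProbabilityTheory.indepFun_of_map_eq_smul_prod {Ω α β : Type*} [MeasurableSpace Ω]
    [MeasurableSpace α] [MeasurableSpace β] {μ : Measure Ω} [IsProbabilityMeasure μ]
    {Z : Ω → α × β} (hZ : Measurable Z) {ν₁ : Measure α} {ν₂ : Measure β} [SFinite ν₁]
    [SFinite ν₂] {c : ℝ≥0∞} (h : μ.map Z = c • ν₁.prod ν₂) :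
    IndepFun (fun ω ↦ (Z ω).1) (fun ω ↦ (Z ω).2) μ := by
  have hmass : c * (ν₁ Set.univ * ν₂ Set.univ) = 1 := by
    have : IsProbabilityMeasure (μ.map Z) := Measure.isProbabilityMeasure_map hZ.aemeasurable
    rw [← Measure.prod_prod, Set.univ_prod_univ, ← smul_eq_mul, ← Measure.smul_apply, ← h,
      measure_univ]
  rw [indepFun_iff_map_prod_eq_prod_map_map hZ.fst.aemeasurable hZ.snd.aemeasurable]
  change μ.map Z = (μ.map (Prod.fst ∘ Z)).prod (μ.map (Prod.snd ∘ Z))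
  rw [← Measure.map_map measurable_fst hZ, ← Measure.map_map measurable_snd hZ, h]
  simp only [Measure.map_smul, Measure.map_fst_prod, Measure.map_snd_prod,
    Measure.prod_smul_left, Measure.prod_smul_right, smul_smul]
  -- the marginals are `(c * ν₂ univ) • ν₁` and `(c * ν₁ univ) • ν₂`
  congr 1
  calc c = c * (c * (ν₁ Set.univ * ν₂ Set.univ)) := by rw [hmass, mul_one]
    _ = _ := by ring

theorem LinearEquiv.indepFun_fst_snd_of_withDensity_mul {E F G : Type*}
    [NormedAddCommGroup E] [NormedSpace ℝ E] [FiniteDimensional ℝ E] [MeasurableSpace E]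
    [BorelSpace E] [NormedAddCommGroup F] [NormedSpace ℝ F] [FiniteDimensional ℝ F]
    [MeasurableSpace F] [BorelSpace F] [NormedAddCommGroup G] [NormedSpace ℝ G]
    [FiniteDimensional ℝ G] [MeasurableSpace G] [BorelSpace G]
    (ν : Measure E) [ν.IsAddHaarMeasure] (Φ : E ≃ₗ[ℝ] F × G) {f : F → ℝ≥0∞} {g : G → ℝ≥0∞}
    (hf : Measurable f) (hg : Measurable g) {μ : Measure E} [IsProbabilityMeasure μ]
    (hμ : μ = ν.withDensity fun x ↦ f (Φ x).1 * g (Φ x).2) :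
    IndepFun (fun x ↦ (Φ x).1) (fun x ↦ (Φ x).2) μ := by
  let e : E ≃ᵐ F × G := Φ.toContinuousLinearEquiv.toHomeomorph.toMeasurableEquiv
  let ρ : Measure (F × G) := Measure.addHaar.prod Measure.addHaar
  have : (ν.map e).IsAddHaarMeasure := Φ.toContinuousLinearEquiv.isAddHaarMeasure_map ν
  obtain ⟨c, hc⟩ : ∃ c : ℝ≥0∞, ν.map e = c • ρ := ⟨_, Measure.isAddLeftInvariant_eq_smul _ ρ⟩
  refine indepFun_of_map_eq_smul_prod e.measurable
    (ν₁ := Measure.addHaar.withDensity f) (ν₂ := Measure.addHaar.withDensity g) (c := c) ?_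
  subst hμ
  change (ν.withDensity ((fun z : F × G ↦ f z.1 * g z.2) ∘ e)).map e = _
  rw [e.map_withDensity_comp ν (by fun_prop), hc, withDensity_smul_measure,
    prod_withDensity hf hg]

theorem ProbabilityTheory.indepFun_mulVec_of_withDensity_exp_quadratic {ι κ : Type*} [Fintype ι]
    [DecidableEq ι] [Fintype κ] [DecidableEq κ] {P : Matrix κ ι ℝ} {R : Matrix ι κ ℝ}
    (hPR : P * R = 1) {A : Matrix ι ι ℝ} (hA : A * (R * P) = (R * P)ᵀ * A) {m : ι → ℝ} {c : ℝ}
    {μ : Measure (ι → ℝ)} [IsProbabilityMeasure μ]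
    (hμ : μ = volume.withDensity fun x ↦
      ENNReal.ofReal (c * Real.exp (-(1 / 2) * ((x - m) ⬝ᵥ (A *ᵥ (x - m)))))) :
    IndepFun (fun x ↦ P *ᵥ x) (fun x ↦ (1 - R * P) *ᵥ x) μ := by
  let Φ := P.mulVecLin.equivProdKerOfRightInverse R.mulVecLin fun y ↦ by
    simp [mulVec_mulVec, hPR]
  have hRP : R * P * (R * P) = R * P := by
    rw [Matrix.mul_assoc, ← Matrix.mul_assoc P, hPR, Matrix.one_mul]
  have hsplit : ∀ y, y ⬝ᵥ (A *ᵥ y) =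
      R *ᵥ (Φ y).1 ⬝ᵥ (A *ᵥ (R *ᵥ (Φ y).1)) + ((Φ y).2 : ι → ℝ) ⬝ᵥ (A *ᵥ (Φ y).2) := fun y ↦ by
    have := dotProduct_mulVec_eq_add_of_mul_self hRP hA y
    rwa [← mulVec_mulVec] at this
  let f (u : κ → ℝ) := ENNReal.ofReal (c * Real.exp (-(1 / 2) *
    (R *ᵥ (u - (Φ m).1) ⬝ᵥ (A *ᵥ (R *ᵥ (u - (Φ m).1))))))
  let g (v : LinearMap.ker P.mulVecLin) := ENNReal.ofReal (Real.exp (-(1 / 2) *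
    (↑(v - (Φ m).2) ⬝ᵥ (A *ᵥ ↑(v - (Φ m).2)))))
  have hdens : ∀ x, ENNReal.ofReal (c * Real.exp (-(1 / 2) * ((x - m) ⬝ᵥ (A *ᵥ (x - m))))) =
      f (Φ x).1 * g (Φ x).2 := fun x ↦ by
    rw [hsplit, map_sub, mul_add, Real.exp_add, ← mul_assoc,
      ENNReal.ofReal_mul' (Real.exp_nonneg _)]
    rfl
  have hind := Φ.indepFun_fst_snd_of_withDensity_mul volume (f := f) (g := g) (by fun_prop)
    (by fun_prop) (hμ.trans (by simp_rw [hdens]))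
  have hW : (fun x ↦ (1 - R * P) *ᵥ x) = Subtype.val ∘ fun x ↦ (Φ x).2 := by
    funext x
    simp [Φ, LinearMap.equivProdKerOfRightInverse, sub_mulVec, mulVec_mulVec]
  rw [hW]
  exact hind.comp measurable_id measurable_subtype_coe

/-- Independence claim of Proposition 3.1 of the paper: under the Gaussian measure `μ` with
mean `m_pr` and positive definite covariance `Γ_pr` (density proportional to
`exp(−(x−m_pr)ᵀ Γ_pr⁻¹ (x−m_pr)/2)` w.r.t. Lebesgue measure), the random vectors
`m ↦ P m` and `m ↦ (I − P_† P) m` with `P_† := Γ_pr Pᵀ Σ_pr⁻¹` are independent. -/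
theorem stmt12 (d_m d_ρ : ℕ) (mpr : Fin d_m → ℝ)
    (Γpr : Matrix (Fin d_m) (Fin d_m) ℝ) (hΓpr : Γpr.PosDef)
    (P : Matrix (Fin d_ρ) (Fin d_m) ℝ)
    (hSpr : IsUnit (P * Γpr * Pᵀ).det)
    (μ : Measure (Fin d_m → ℝ)) [IsProbabilityMeasure μ]
    (c : ℝ)
    (hμ : μ = volume.withDensity fun x =>
      ENNReal.ofReal (c * Real.exp (-(1 / 2) * ((x - mpr) ⬝ᵥ (Γpr⁻¹ *ᵥ (x - mpr)))))) :
    ProbabilityTheory.IndepFun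
      (fun m : Fin d_m → ℝ => P *ᵥ m)
      (fun m : Fin d_m → ℝ =>
        ((1 : Matrix (Fin d_m) (Fin d_m) ℝ) - Γpr * Pᵀ * (P * Γpr * Pᵀ)⁻¹ * P) *ᵥ m) μ := by
  have hPR : P * (Γpr * Pᵀ * (P * Γpr * Pᵀ)⁻¹) = 1 := by
    rw [← Matrix.mul_assoc, ← Matrix.mul_assoc, mul_nonsing_inv _ hSpr]
  have hΓsymm : Γpr.IsSymm := isHermitian_iff_isSymm.mp hΓpr.isHermitian
  have hΓunit : IsUnit Γpr.det := (isUnit_iff_isUnit_det Γpr).mp hΓpr.isUnit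
  exact indepFun_mulVec_of_withDensity_exp_quadratic hPR
    (inv_mul_eq_transpose_mul_inv_of_isSymm hΓsymm hΓunit P) hμ
end
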